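/- arXiv:1909.04799 — 3 statements merged into one kernel-verified Lean document; each statement's English description precedes it below -/
import Mathlib

section
/- Let C₁, ..., C_k be nonempty convex subsets of ℝⁿ, and fix ḡᵢ ∈ ri Cᵢ for each i. For each i let Uᵢ = {d ∈ ℝⁿ : dᵀ(g − ḡᵢ) = 0 for all g ∈ Cᵢ}. Let C = C₁ + ⋯ + C_k (Minkowski sum) and ḡ = ḡ₁ + ⋯ + ḡ_k. Then U := {d ∈ ℝⁿ : dᵀ(g − ḡ) = 0 for all g ∈ C} equals ⋂ᵢ Uᵢ. -/
open scoped RealInnerProductSpace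

theorem U_space_of_sum_eq_inter (n k : ℕ)
    (C : Fin k → Set (EuclideanSpace ℝ (Fin n)))
    (hne : ∀ i, (C i).Nonempty) (hconv : ∀ i, Convex ℝ (C i))
    (gbar : Fin k → EuclideanSpace ℝ (Fin n))
    (hg : ∀ i, gbar i ∈ intrinsicInterior ℝ (C i)) :
    {d : EuclideanSpace ℝ (Fin n) |
        ∀ g ∈ {g : EuclideanSpace ℝ (Fin n) |
          ∃ c : Fin k → EuclideanSpace ℝ (Fin n), (∀ i, c i ∈ C i) ∧ g = ∑ i, c i},
        ⟪d, g - ∑ i, gbar i⟫ = 0} =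
      ⋂ i, {d : EuclideanSpace ℝ (Fin n) | ∀ g ∈ C i, ⟪d, g - gbar i⟫ = 0} := by
  ext d
  simp only [Set.mem_setOf_eq, Set.mem_iInter]
  constructor
  · intro h i g hgC
    have key := h (g + ∑ j ∈ Finset.univ.erase i, gbar j)
      ⟨Function.update gbar i g, ?_, ?_⟩
    · have heq : (g + ∑ j ∈ Finset.univ.erase i, gbar j) - ∑ j, gbar j
          = g - gbar i := by
        rw [← Finset.add_sum_erase _ _ (Finset.mem_univ i)]
        abel
      rwa [heq] at key
    · intro j
      by_cases hj : j = i
      · subst hj; simpa using hgC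
      · rw [Function.update_of_ne hj]
        exact intrinsicInterior_subset (hg j)
    · rw [← Finset.add_sum_erase _ _ (Finset.mem_univ i), Function.update_self]
      congr 1
      exact Finset.sum_congr rfl fun j hj =>
        (Function.update_of_ne (Finset.ne_of_mem_erase hj) _ _).symm
  · rintro h g ⟨c, hc, rfl⟩
    have heq : (∑ i, c i) - ∑ i, gbar i = ∑ i, (c i - gbar i) := by
      rw [Finset.sum_sub_distrib]
    rw [heq, inner_sum]
    exact Finset.sum_eq_zero fun i _ => h i (c i) (hc i)
end

section
/- Let h : ℝⁿ → ℝ be convex, Φ : ℝᵐ → ℝⁿ differentiable at x̄, and suppose ∂(h∘Φ)(x̄) = ∇Φ(x̄)ᵀ ∂h(Φ(x̄)) (subdifferential chain rule holds). If ḡ ∈ ri ∂h(Φ(x̄)), then ∇Φ(x̄)ᵀ ḡ ∈ ri ∂(h∘Φ)(x̄), and consequently the U-space of f = h∘Φ at x̄ is U = {d ∈ ℝᵐ : dᵀ∇Φ(x̄)ᵀ g = dᵀ∇Φ(x̄)ᵀ ḡ for all g ∈ ∂h(Φ(x̄))}. -/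
/-!
A linear map `A` sends the relative interior of a convex set `S` into the relative interior
of `A '' S`. Indeed, `ḡ ∈ ri S` can be pushed a little beyond itself away from any point of `S`;
choosing that point as a preimage of some `z ∈ ri (A '' S)` (which exists in finite dimension)
puts `A ḡ` strictly between `z` and a point of `A '' S`, and such points lie in the relative
interior. With `S = ∂h(Φ x̄)` and `A = ∇Φ(x̄)ᵀ`, the description of the U-space is then the
chain rule `∂f(x̄) = A '' S` read through the image.
-/

open Set Filter Topology
open scoped RealInnerProductSpace

/-- The convex subdifferential. -/
def subdiff {n : ℕ} (f : EuclideanSpace ℝ (Fin n) → ℝ) (x : EuclideanSpace ℝ (Fin n)) :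
    Set (EuclideanSpace ℝ (Fin n)) :=
  {g | ∀ y, f x + ⟪g, y - x⟫ ≤ f y}

lemma mem_intrinsicInterior_iff_mem_nhdsWithin {𝕜 V : Type*} [Ring 𝕜] [AddCommGroup V]
    [Module 𝕜 V] [TopologicalSpace V] {s : Set V} {x : V} :
    x ∈ intrinsicInterior 𝕜 s ↔
      x ∈ affineSpan 𝕜 s ∧ s ∈ 𝓝[(affineSpan 𝕜 s : Set V)] x := by
  simp only [mem_intrinsicInterior, mem_interior_iff_mem_nhds]
  constructor
  · rintro ⟨⟨y, hy⟩, hs, rfl⟩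
    exact ⟨hy, preimage_coe_mem_nhds_subtype.1 hs⟩
  · rintro ⟨hx, hs⟩
    exact ⟨⟨x, hx⟩, preimage_coe_mem_nhds_subtype.2 hs, rfl⟩

section IntrinsicInterior

variable {V : Type*} [NormedAddCommGroup V] [NormedSpace ℝ V] {s : Set V}

lemma exists_add_smul_sub_mem_of_mem_intrinsicInterior {x y : V}
    (hx : x ∈ intrinsicInterior ℝ s) (hy : y ∈ s) : ∃ ε > (0 : ℝ), x + ε • (x - y) ∈ s := by
  obtain ⟨hxA, hs⟩ := mem_intrinsicInterior_iff_mem_nhdsWithin.1 hx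
  have hyA : y ∈ affineSpan ℝ s := subset_affineSpan ℝ s hy
  have hray : Tendsto (fun ε : ℝ => x + ε • (x - y)) (𝓝[>] 0)
      (𝓝[(affineSpan ℝ s : Set V)] x) := by
    refine tendsto_nhdsWithin_iff.2 ⟨?_, Eventually.of_forall fun ε => ?_⟩
    · have hcont : Continuous fun ε : ℝ => x + ε • (x - y) := by fun_prop
      simpa using (hcont.tendsto 0).mono_left nhdsWithin_le_nhds
    · have hε : x + ε • (x - y) = (1 + ε) • (x -ᵥ y) +ᵥ y := by
        rw [vsub_eq_sub, vadd_eq_add]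
        module
      rw [SetLike.mem_coe, hε]
      exact (affineSpan ℝ s).smul_vsub_vadd_mem (1 + ε) hxA hyA hyA
  obtain ⟨ε, hεs, hε⟩ := ((hray.eventually_mem hs).and self_mem_nhdsWithin).exists
  exact ⟨ε, hε, hεs⟩

lemma Convex.add_smul_sub_mem_intrinsicInterior (hs : Convex ℝ s) {x y : V} (hx : x ∈ s)
    (hy : y ∈ intrinsicInterior ℝ s) {t : ℝ} (ht : t ∈ Ioc (0 : ℝ) 1) :
    x + t • (y - x) ∈ intrinsicInterior ℝ s := by
  obtain ⟨hyA, hsy⟩ := mem_intrinsicInterior_iff_mem_nhdsWithin.1 hy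
  have hxA : x ∈ affineSpan ℝ s := subset_affineSpan ℝ s hx
  have ht0 : t ≠ 0 := ht.1.ne'
  -- pull the neighbourhood of `y` back along the inverse homothety centred at `x`
  let g : V → V := fun w => x + t⁻¹ • (w - x)
  have hg_mem : ∀ w ∈ affineSpan ℝ s, g w ∈ affineSpan ℝ s := fun w hw => by
    simpa [g, add_comm] using (affineSpan ℝ s).smul_vsub_vadd_mem t⁻¹ hw hxA hxA
  have hgy : g (x + t • (y - x)) = y := by simp [g, smul_smul, ht0]
  have hg : Tendsto g (𝓝[(affineSpan ℝ s : Set V)] (x + t • (y - x)))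
      (𝓝[(affineSpan ℝ s : Set V)] y) := by
    simpa only [hgy] using (by fun_prop : Continuous g).continuousWithinAt.tendsto_nhdsWithin
      (x := x + t • (y - x)) hg_mem
  refine mem_intrinsicInterior_iff_mem_nhdsWithin.2 ⟨?_, ?_⟩
  · simpa [add_comm] using (affineSpan ℝ s).smul_vsub_vadd_mem t hyA hxA hxA
  · filter_upwards [hg hsy] with w hw
    simpa [g, smul_smul, ht0] using hs.add_smul_sub_mem hx hw ⟨ht.1.le, ht.2⟩

theorem Convex.map_mem_intrinsicInterior_image {W : Type*} [NormedAddCommGroup W]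
    [NormedSpace ℝ W] [FiniteDimensional ℝ W] (hs : Convex ℝ s) (f : V →ₗ[ℝ] W) {x : V}
    (hx : x ∈ intrinsicInterior ℝ s) : f x ∈ intrinsicInterior ℝ (f '' s) := by
  have hfs : Convex ℝ (f '' s) := hs.linear_image f
  obtain ⟨_, hz⟩ := Set.Nonempty.intrinsicInterior hfs
    ⟨f x, mem_image_of_mem f (intrinsicInterior_subset hx)⟩
  obtain ⟨w, hw, rfl⟩ := intrinsicInterior_subset hz
  obtain ⟨ε, hε, hext⟩ := exists_add_smul_sub_mem_of_mem_intrinsicInterior hx hw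
  have ht : ε / (1 + ε) ∈ Ioc (0 : ℝ) 1 :=
    ⟨by positivity, (div_le_one (by positivity)).2 (by linarith)⟩
  convert hfs.add_smul_sub_mem_intrinsicInterior (mem_image_of_mem f hext) hz ht using 1
  simp only [map_add, map_smul, map_sub]
  match_scalars <;> field_simp <;> ring

end IntrinsicInterior

lemma convex_subdiff {n : ℕ} (f : EuclideanSpace ℝ (Fin n) → ℝ) (x : EuclideanSpace ℝ (Fin n)) :
    Convex ℝ (subdiff f x) := by
  intro g₁ hg₁ g₂ hg₂ a b ha hb hab y
  have hf : f x = a * f x + b * f x := by rw [← add_mul, hab, one_mul]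
  have hfy : f y = a * f y + b * f y := by rw [← add_mul, hab, one_mul]
  rw [inner_add_left, real_inner_smul_left, real_inner_smul_left, hf, hfy]
  linarith [mul_le_mul_of_nonneg_left (hg₁ y) ha, mul_le_mul_of_nonneg_left (hg₂ y) hb]

theorem chain_rule_U_space_general (m n : ℕ)
    (h : EuclideanSpace ℝ (Fin n) → ℝ)
    (Φ : EuclideanSpace ℝ (Fin m) → EuclideanSpace ℝ (Fin n))
    (xbar : EuclideanSpace ℝ (Fin m))
    (Sf : Set (EuclideanSpace ℝ (Fin m)))
    (hchain : Sf =
      (fun g => ContinuousLinearMap.adjoint (fderiv ℝ Φ xbar) g) '' subdiff h (Φ xbar))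
    (gbar : EuclideanSpace ℝ (Fin n))
    (hg : gbar ∈ intrinsicInterior ℝ (subdiff h (Φ xbar))) :
    ContinuousLinearMap.adjoint (fderiv ℝ Φ xbar) gbar ∈ intrinsicInterior ℝ Sf ∧
    {d : EuclideanSpace ℝ (Fin m) | ∀ g ∈ subdiff h (Φ xbar),
        ⟪d, ContinuousLinearMap.adjoint (fderiv ℝ Φ xbar) g⟫ =
          ⟪d, ContinuousLinearMap.adjoint (fderiv ℝ Φ xbar) gbar⟫} =
      {d : EuclideanSpace ℝ (Fin m) | ∀ s ∈ Sf,
        ⟪d, s⟫ = ⟪d, ContinuousLinearMap.adjoint (fderiv ℝ Φ xbar) gbar⟫} := by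
  subst hchain
  refine ⟨(convex_subdiff h (Φ xbar)).map_mem_intrinsicInterior_image
    (ContinuousLinearMap.adjoint (fderiv ℝ Φ xbar)).toLinearMap hg, ?_⟩
  ext d
  simp only [mem_ofPred_eq, forall_mem_image]

theorem chain_rule_U_space (m n : ℕ)
    (h : EuclideanSpace ℝ (Fin n) → ℝ) (hconv : ConvexOn ℝ Set.univ h)
    (Φ : EuclideanSpace ℝ (Fin m) → EuclideanSpace ℝ (Fin n))
    (xbar : EuclideanSpace ℝ (Fin m)) (hΦ : DifferentiableAt ℝ Φ xbar)
    (Sf : Set (EuclideanSpace ℝ (Fin m)))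
    (hchain : Sf =
      (fun g => ContinuousLinearMap.adjoint (fderiv ℝ Φ xbar) g) '' subdiff h (Φ xbar))
    (gbar : EuclideanSpace ℝ (Fin n))
    (hg : gbar ∈ intrinsicInterior ℝ (subdiff h (Φ xbar))) :
    ContinuousLinearMap.adjoint (fderiv ℝ Φ xbar) gbar ∈ intrinsicInterior ℝ Sf ∧
    {d : EuclideanSpace ℝ (Fin m) | ∀ g ∈ subdiff h (Φ xbar),
        ⟪d, ContinuousLinearMap.adjoint (fderiv ℝ Φ xbar) g⟫ =
          ⟪d, ContinuousLinearMap.adjoint (fderiv ℝ Φ xbar) gbar⟫} =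
      {d : EuclideanSpace ℝ (Fin m) | ∀ s ∈ Sf,
        ⟪d, s⟫ = ⟪d, ContinuousLinearMap.adjoint (fderiv ℝ Φ xbar) gbar⟫} :=
  chain_rule_U_space_general m n h Φ xbar Sf hchain gbar hg
end

section
/- For the ℓ¹-norm h(x) = ‖x‖₁ on ℝⁿ, a point x̄, ḡ with ḡᵢ = sgn(x̄ᵢ), and V = {v ∈ ℝⁿ : vᵢ = 0 whenever x̄ᵢ ≠ 0}: for all u ∈ U = {u : uᵢ = 0 whenever x̄ᵢ = 0} with ‖u‖ small enough (‖u‖_∞ < min{|x̄ᵢ| : x̄ᵢ ≠ 0}), the function v ↦ ‖x̄ + u + v‖₁ − ḡᵀv over v ∈ V attains its minimum uniquely at v = 0, and the minimum value equals Σ_{i : x̄ᵢ≠0} |x̄ᵢ + uᵢ|. -/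
open Classical in
theorem l1_fast_track_min (n : ℕ) (xbar u gbar : Fin n → ℝ)
    (hgbar : ∀ i, gbar i = Real.sign (xbar i))
    (hu : ∀ i, xbar i = 0 → u i = 0)
    (hsmall : ∀ i j, xbar j ≠ 0 → |u i| < |xbar j|) :
    (∀ v : Fin n → ℝ, (∀ i, xbar i ≠ 0 → v i = 0) →
      (∑ i ∈ Finset.univ.filter (fun i => xbar i ≠ 0), |xbar i + u i|) ≤
        (∑ i, |xbar i + u i + v i|) - ∑ i, gbar i * v i) ∧
    (∀ v : Fin n → ℝ, (∀ i, xbar i ≠ 0 → v i = 0) →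
      (∑ i, |xbar i + u i + v i|) - (∑ i, gbar i * v i) =
        (∑ i ∈ Finset.univ.filter (fun i => xbar i ≠ 0), |xbar i + u i|) → v = 0) := by
  have hlin : ∀ v : Fin n → ℝ, (∀ i, xbar i ≠ 0 → v i = 0) →
      (∑ i, gbar i * v i) = 0 := by
    intro v hv
    apply Finset.sum_eq_zero
    intro i _
    by_cases h : xbar i = 0
    · rw [hgbar, h, Real.sign_zero, zero_mul]
    · rw [hv i h, mul_zero]
  have hsum : ∀ v : Fin n → ℝ, (∀ i, xbar i ≠ 0 → v i = 0) →
      (∑ i, |xbar i + u i + v i|) =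
        (∑ i ∈ Finset.univ.filter (fun i => xbar i ≠ 0), |xbar i + u i|) +
        (∑ i ∈ Finset.univ.filter (fun i => ¬ xbar i ≠ 0), |v i|) := by
    intro v hv
    rw [← Finset.sum_filter_add_sum_filter_not Finset.univ (fun i => xbar i ≠ 0)]
    congr 1
    · apply Finset.sum_congr rfl
      intro i hi
      rw [hv i (Finset.mem_filter.mp hi).2, add_zero]
    · apply Finset.sum_congr rfl
      intro i hi
      have h0 : xbar i = 0 := not_not.mp (Finset.mem_filter.mp hi).2
      rw [h0, hu i h0, zero_add, zero_add]
  constructor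
  · intro v hv
    rw [hlin v hv, sub_zero, hsum v hv]
    have : (0:ℝ) ≤ ∑ i ∈ Finset.univ.filter (fun i => ¬ xbar i ≠ 0), |v i| :=
      Finset.sum_nonneg fun i _ => abs_nonneg _
    linarith
  · intro v hv heq
    rw [hlin v hv, sub_zero, hsum v hv] at heq
    have h0 : (∑ i ∈ Finset.univ.filter (fun i => ¬ xbar i ≠ 0), |v i|) = 0 := by
      linarith
    have hz := (Finset.sum_eq_zero_iff_of_nonneg (fun i _ => abs_nonneg (v i))).mp h0
    funext i
    by_cases h : xbar i = 0
    · have := hz i (Finset.mem_filter.mpr ⟨Finset.mem_univ i, not_not.mpr h⟩)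
      simpa using abs_eq_zero.mp this
    · exact hv i h
end
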